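/- Let n ≥ 2 be an integer and C ∈ (0, π/2). Then ∫_C^{π/2} ((sin z / sin C)^{2(n−1)} − 1)^{−1/2} dz ≥ ((sin C)^{n−1} / √(2(n−1)·cos C)) · ∫_0^{π/2 − C} (sin z)^{−1/2} dz. -/

import Mathlib

/-!
Write `s = sin C` and `m = n - 1`. On `[C, π/2]` the mean value bound `t^{2m} - s^{2m} ≤ 2m (t - s)`
for `t, s ∈ [0, 1]` and `sin z - sin C ≤ cos C · sin (z - C)` give
`(sin z / s)^{2m} - 1 ≤ 2m cos C · sin (z - C) / s^{2m}`. Since `x ↦ x^{-1/2}` is antitone, the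
integrand is at least `s^m / √(2m cos C) · sin (z - C)^{-1/2}`, and the substitution `z ↦ z - C`
turns the integral of the latter into the right-hand side. Both integrals converge because the
bases are bounded below by positive multiples of `sin (z - C)`, resp. `z`.
-/

open Real Set MeasureTheory intervalIntegral

lemma abs_pow_sub_pow_le_nat_mul {s t : ℝ} (hs : |s| ≤ 1) (ht : |t| ≤ 1) (k : ℕ) :
    |t ^ k - s ^ k| ≤ k * |t - s| :=
  calc |t ^ k - s ^ k| ≤ |t - s| * k * max |t| |s| ^ (k - 1) := abs_pow_sub_pow_le ..
    _ ≤ |t - s| * k * 1 := by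
        gcongr
        exact pow_le_one₀ (le_max_of_le_left (abs_nonneg t)) (max_le ht hs)
    _ = k * |t - s| := by ring

lemma sin_sub_sin_le_cos_mul_sin_sub {y : ℝ} (hy : 0 ≤ sin y) (x : ℝ) :
    sin x - sin y ≤ cos y * sin (x - y) := by
  have h : sin x = sin (x - y) * cos y + cos (x - y) * sin y := by
    rw [← sin_add, sub_add_cancel]
  nlinarith [cos_le_one (x - y)]

lemma sin_sq_sub_sin_sq (x y : ℝ) : sin x ^ 2 - sin y ^ 2 = sin (x + y) * sin (x - y) := by
  rw [sin_add, sin_sub]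
  linear_combination sin y ^ 2 * sin_sq_add_cos_sq x - sin x ^ 2 * sin_sq_add_cos_sq y

lemma intervalIntegrable_rpow_of_mul_le {f h : ℝ → ℝ} {a b c r : ℝ} (hab : a ≤ b) (hr : r ≤ 0)
    (hc : 0 < c) (hf : ContinuousOn f (Ioc a b)) (hh : ∀ x ∈ Ioc a b, 0 < h x)
    (hle : ∀ x ∈ Ioc a b, c * h x ≤ f x)
    (hint : IntervalIntegrable (fun x => h x ^ r) volume a b) :
    IntervalIntegrable (fun x => f x ^ r) volume a b := by
  have hch : ∀ x ∈ Ioc a b, 0 < c * h x := fun x hx => mul_pos hc (hh x hx)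
  have hf_pos : ∀ x ∈ Ioc a b, 0 < f x := fun x hx => (hch x hx).trans_le (hle x hx)
  rw [intervalIntegrable_iff_integrableOn_Ioc_of_le hab] at hint ⊢
  refine (hint.const_mul (c ^ r)).mono' ((hf.rpow_const fun x hx =>
    Or.inl (hf_pos x hx).ne').aestronglyMeasurable measurableSet_Ioc) ?_
  filter_upwards [ae_restrict_mem measurableSet_Ioc] with x hx
  rw [norm_of_nonneg (rpow_nonneg (hf_pos x hx).le _), ← mul_rpow hc.le (hh x hx).le]
  exact rpow_le_rpow_of_nonpos (hch x hx) (hle x hx) hr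

lemma intervalIntegrable_sin_rpow {a r : ℝ} (ha : 0 ≤ a) (ha' : a ≤ π / 2) (hr : -1 < r)
    (hr' : r ≤ 0) : IntervalIntegrable (fun x => sin x ^ r) volume 0 a :=
  intervalIntegrable_rpow_of_mul_le (h := fun x => x) ha hr' (by positivity)
    continuous_sin.continuousOn (fun _ hx => hx.1) (fun _ hx => mul_le_sin hx.1.le (hx.2.trans ha'))
    (intervalIntegrable_rpow' hr)

lemma rpow_neg_half_mul_div_sq {A u s : ℝ} (hA : 0 ≤ A) (hu : 0 ≤ u) (hs : 0 ≤ s) :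
    (A * u / s ^ 2) ^ (-(1 : ℝ) / 2) = s / √A * u ^ (-(1 : ℝ) / 2) := by
  rw [mul_div_right_comm, mul_rpow (by positivity) hu, neg_div, rpow_neg (by positivity),
    ← sqrt_eq_rpow, sqrt_div hA, sqrt_sq hs, inv_div]

lemma sin_div_sin_pow_sub_one_le {C z : ℝ} (hC : 0 < C) (hCz : C ≤ z) (hz : z ≤ π / 2) (k : ℕ) :
    (sin z / sin C) ^ k - 1 ≤ k * cos C * sin (z - C) / sin C ^ k := by
  have hsC : 0 < sin C := sin_pos_of_pos_of_lt_pi hC (by linarith [pi_pos])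
  have hsCz : sin C ≤ sin z := sin_le_sin_of_le_of_le_pi_div_two (by linarith) hz hCz
  have hpow : sin z ^ k - sin C ^ k ≤ k * (sin z - sin C) := by
    have h := abs_pow_sub_pow_le_nat_mul (abs_sin_le_one C) (abs_sin_le_one z) k
    rw [abs_of_nonneg (sub_nonneg.2 hsCz)] at h
    exact (le_abs_self _).trans h
  rw [div_pow, div_sub_one (pow_pos hsC k).ne', mul_assoc]
  gcongr
  exact hpow.trans (by gcongr; exact sin_sub_sin_le_cos_mul_sin_sub hsC.le z)

lemma cos_div_sin_mul_sin_sub_le {C z : ℝ} (hC : 0 < C) (hCz : C ≤ z) (hz : z ≤ π / 2) {k : ℕ}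
    (hk : 2 ≤ k) : cos C / sin C * sin (z - C) ≤ (sin z / sin C) ^ k - 1 := by
  have hsC : 0 < sin C := sin_pos_of_pos_of_lt_pi hC (by linarith [pi_pos])
  have hsCz : sin C ≤ sin z := sin_le_sin_of_le_of_le_pi_div_two (by linarith) hz hCz
  have hcC : 0 ≤ cos C := cos_nonneg_of_mem_Icc ⟨by linarith, by linarith⟩
  have hcz : 0 ≤ cos z := cos_nonneg_of_mem_Icc ⟨by linarith, hz⟩
  have hsub : 0 ≤ sin (z - C) := sin_nonneg_of_nonneg_of_le_pi (by linarith) (by linarith)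
  have hsum : sin C * cos C ≤ sin (z + C) := by
    rw [sin_add]; nlinarith [mul_nonneg hcz hsC.le]
  have hsq : cos C / sin C * sin (z - C) ≤ (sin z / sin C) ^ 2 - 1 :=
    calc cos C / sin C * sin (z - C) = sin C * cos C * sin (z - C) / sin C ^ 2 := by
          field_simp
      _ ≤ sin (z + C) * sin (z - C) / sin C ^ 2 := by gcongr
      _ = (sin z / sin C) ^ 2 - 1 := by
          rw [← sin_sq_sub_sin_sq, div_pow, div_sub_one (pow_pos hsC 2).ne']
  exact hsq.trans (by gcongr; exact (one_le_div hsC).2 hsCz)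

lemma le_catenoid_integrand {m : ℕ} (hm : 1 ≤ m) {C z : ℝ} (hC : 0 < C) (hCz : C < z)
    (hz : z ≤ π / 2) :
    sin C ^ m / √(2 * m * cos C) * sin (z - C) ^ (-(1 : ℝ) / 2)
      ≤ ((sin z / sin C) ^ (2 * m) - 1) ^ (-(1 : ℝ) / 2) := by
  have hsC : 0 < sin C := sin_pos_of_pos_of_lt_pi hC (by linarith [pi_pos])
  have hcC : 0 < cos C := cos_pos_of_mem_Ioo ⟨by linarith, by linarith⟩
  have hsub : 0 < sin (z - C) := sin_pos_of_pos_of_lt_pi (by linarith) (by linarith)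
  have hupper := sin_div_sin_pow_sub_one_le hC hCz.le hz (2 * m)
  push_cast at hupper
  rw [← rpow_neg_half_mul_div_sq (by positivity) hsub.le (by positivity), ← pow_mul, mul_comm m 2]
  refine rpow_le_rpow_of_nonpos ?_ hupper (by norm_num)
  exact (by positivity : 0 < cos C / sin C * sin (z - C)).trans_le
    (cos_div_sin_mul_sin_sub_le hC hCz.le hz (by omega))

/-- Lower bound for the half-period integral of the spherical catenoid:
`∫_C^{π/2} ((sin z/sin C)^{2(n−1)} − 1)^{−1/2} dz
  ≥ ((sin C)^{n−1}/√(2(n−1) cos C)) ∫_0^{π/2−C} (sin z)^{−1/2} dz`. -/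
theorem spherical_catenoid_halfperiod_integral_lower_bound
    (n : ℕ) (hn : 2 ≤ n) (C : ℝ) (hC : C ∈ Set.Ioo 0 (π / 2)) :
    (∫ z in C..(π / 2),
        ((Real.sin z / Real.sin C) ^ (2 * (n - 1)) - 1) ^ (-(1 : ℝ) / 2))
      ≥ ((Real.sin C) ^ (n - 1) / Real.sqrt (2 * ((n : ℝ) - 1) * Real.cos C))
          * ∫ z in (0 : ℝ)..(π / 2 - C), (Real.sin z) ^ (-(1 : ℝ) / 2) := by
  obtain ⟨hC0, hC2⟩ := hC
  obtain ⟨m, rfl⟩ : ∃ m, n = m + 1 := ⟨n - 1, by omega⟩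
  have hm : 1 ≤ m := by omega
  simp only [Nat.add_sub_cancel, Nat.cast_add, Nat.cast_one, add_sub_cancel_right]
  have hsin_int : IntervalIntegrable (fun z => sin (z - C) ^ (-(1 : ℝ) / 2)) volume C (π / 2) := by
    simpa using (intervalIntegrable_sin_rpow (sub_nonneg.2 hC2.le) (by linarith)
      (by norm_num) (by norm_num)).comp_sub_right C
  have hsC : 0 < sin C := sin_pos_of_pos_of_lt_pi hC0 (by linarith [pi_pos])
  have hcC : 0 < cos C := cos_pos_of_mem_Ioo ⟨by linarith, hC2⟩
  have hf_int : IntervalIntegrable (fun z => ((sin z / sin C) ^ (2 * m) - 1) ^ (-(1 : ℝ) / 2))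
      volume C (π / 2) :=
    intervalIntegrable_rpow_of_mul_le hC2.le (by norm_num) (div_pos hcC hsC) (by fun_prop)
      (fun z hz => sin_pos_of_pos_of_lt_pi (by linarith [hz.1]) (by linarith [hz.2]))
      (fun z hz => cos_div_sin_mul_sin_sub_le hC0 hz.1.le hz.2 (by omega)) hsin_int
  rw [← sub_self C, ← integral_comp_sub_right, ← intervalIntegral.integral_const_mul]
  exact integral_mono_on_of_le_Ioo hC2.le (hsin_int.const_mul _) hf_int
    fun z hz => le_catenoid_integrand hm hC0 hz.1 hz.2.le
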